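/- arXiv:2209.05985 — 2 statements merged into one kernel-verified Lean document; each statement's English description precedes it below -/
import Mathlib

section
/- Let I be a finite nonempty set, ε : I → {1, -1}, and for p ∈ I let W(p) be a finite multiset of positive integers of fixed size n. Suppose q ∈ I minimizes the weight-sum strictly among points of the opposite sign: for all p with ε(p) ≠ ε(q), sum(W(q)) < sum(W(p)). Then the coefficient of t^{sum(W(q))} in F(t) = ∑_{p∈I} ε(p) · t^{sum(W(p))} · ∏_{w ∈ W(p)} (1 - t^w)^{-1} has the same sign as ε(q) and in particular is nonzero; hence F ≠ 0. -/
/-!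
Every factor `(1 - t^w)⁻¹` has nonnegative coefficients and constant term `1`, hence so does
each product `∏_{w ∈ W p} (1 - t^w)⁻¹`. In degree `(W q).sum`, a point of the opposite sign
contributes nothing because its series starts in a strictly higher degree, while a point of the
same sign contributes `ε q` times a nonnegative number; the point `q` itself contributes exactly
`ε q`. Multiplying by `ε q` therefore gives a positive number.
-/

open PowerSeries

section Nonneg

variable {R : Type*} [CommSemiring R] [PartialOrder R] [IsOrderedRing R]

theorem PowerSeries.coeff_mul_nonneg {f g : R⟦X⟧} (hf : ∀ k, 0 ≤ coeff k f)
    (hg : ∀ k, 0 ≤ coeff k g) (k : ℕ) : 0 ≤ coeff k (f * g) := by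
  rw [coeff_mul]
  exact Finset.sum_nonneg fun _ _ => mul_nonneg (hf _) (hg _)

theorem PowerSeries.coeff_multiset_prod_nonneg {s : Multiset R⟦X⟧}
    (hs : ∀ f ∈ s, ∀ k, 0 ≤ coeff k f) (k : ℕ) : 0 ≤ coeff k s.prod :=
  Multiset.prod_induction (fun f => ∀ k, 0 ≤ coeff k f) s (fun _ _ => coeff_mul_nonneg)
    (fun k => by rw [coeff_one]; split_ifs <;> simp) hs k

end Nonneg

theorem PowerSeries.constantCoeff_multiset_prod_eq_one {R : Type*} [CommSemiring R]
    {s : Multiset R⟦X⟧} (hs : ∀ f ∈ s, constantCoeff f = 1) : constantCoeff s.prod = 1 :=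
  Multiset.prod_induction (fun f => constantCoeff f = 1) s
    (fun _ _ ha hb => by rw [map_mul, ha, hb, one_mul]) (map_one _) hs

section Geometric

variable {K : Type*} [Field K] {w : ℕ}

theorem PowerSeries.constantCoeff_inv_one_sub_X_pow (hw : w ≠ 0) :
    constantCoeff (1 - X ^ w : K⟦X⟧)⁻¹ = 1 := by
  simp [constantCoeff_inv, hw]

theorem PowerSeries.inv_one_sub_X_pow_eq_one_add (hw : w ≠ 0) :
    (1 - X ^ w : K⟦X⟧)⁻¹ = 1 + X ^ w * (1 - X ^ w)⁻¹ := by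
  have h := PowerSeries.mul_inv_cancel (1 - X ^ w : K⟦X⟧) (by simp [hw])
  linear_combination h

theorem PowerSeries.coeff_inv_one_sub_X_pow_nonneg [LinearOrder K] [IsStrictOrderedRing K]
    (hw : w ≠ 0) (k : ℕ) : 0 ≤ coeff k (1 - X ^ w : K⟦X⟧)⁻¹ := by
  induction k using Nat.strong_induction_on with
  | _ k ih =>
    -- unfolding `B = 1 + X^w * B` once expresses `coeff k B` through `coeff (k - w) B`
    rw [inv_one_sub_X_pow_eq_one_add hw, map_add, coeff_one, coeff_X_pow_mul']
    refine add_nonneg (by split_ifs <;> simp) ?_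
    split_ifs
    · exact ih _ (by omega)
    · exact le_rfl

end Geometric

theorem PowerSeries.coeff_intCast_mul_X_pow_mul {R : Type*} [CommRing R] (e : ℤ) (a m : ℕ)
    (G : R⟦X⟧) :
    coeff m ((e : R⟦X⟧) * X ^ a * G) = e * if a ≤ m then coeff (m - a) G else 0 := by
  rw [mul_assoc, ← map_intCast (C (R := R)), coeff_C_mul, coeff_X_pow_mul']

theorem PowerSeries.intCast_mul_coeff_sum_intCast_mul_X_pow_mul_pos {R I : Type*} [CommRing R]
    [LinearOrder R] [IsStrictOrderedRing R] [Fintype I]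
    (ε : I → ℤ) (a : I → ℕ) (G : I → R⟦X⟧) (hG : ∀ p k, 0 ≤ coeff k (G p))
    (hG₀ : ∀ p, constantCoeff (G p) = 1) (q : I) (hεq : ε q ≠ 0)
    (hq : ∀ p, ε p ≠ ε q → a q < a p) :
    0 < (ε q : R) * coeff (a q) (∑ p, (ε p : R⟦X⟧) * X ^ a p * G p) := by
  have hεq' : 0 < (ε q : R) * ε q := mul_self_pos.mpr (Int.cast_ne_zero.mpr hεq)
  simp only [map_sum, coeff_intCast_mul_X_pow_mul, Finset.mul_sum]
  refine Finset.sum_pos' (fun p _ => ?_) ⟨q, Finset.mem_univ q, ?_⟩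
  · by_cases hp : ε p = ε q
    · rw [hp, ← mul_assoc]
      refine mul_nonneg hεq'.le ?_
      split_ifs
      exacts [hG p _, le_rfl]
    · rw [if_neg (not_le.mpr (hq p hp)), mul_zero, mul_zero]
  · rw [if_pos le_rfl, Nat.sub_self, coeff_zero_eq_constantCoeff_apply, hG₀, mul_one]
    exact hεq'

theorem fixed_point_series_coeff_sign_general (I : Type*) [Fintype I]
    (ε : I → ℤ) (hε : ∀ p, ε p = 1 ∨ ε p = -1)
    (W : I → Multiset ℕ)
    (hpos : ∀ p, ∀ w ∈ W p, 0 < w)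
    (q : I) (hq : ∀ p, ε p ≠ ε q → (W q).sum < (W p).sum)
    (F : PowerSeries ℚ)
    (hF : F = ∑ p : I, (ε p : PowerSeries ℚ) * (PowerSeries.X : PowerSeries ℚ) ^ (W p).sum *
        ((W p).map (fun w => (1 - (PowerSeries.X : PowerSeries ℚ) ^ w)⁻¹)).prod) :
    0 < (ε q : ℚ) * PowerSeries.coeff ((W q).sum) F ∧ F ≠ 0 := by
  have hcoeff : 0 < (ε q : ℚ) * coeff ((W q).sum) F := by
    rw [hF]
    refine intCast_mul_coeff_sum_intCast_mul_X_pow_mul_pos ε _ _ (fun p => ?_) (fun p => ?_) q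
      (by rcases hε q with h | h <;> simp [h]) hq
    · exact coeff_multiset_prod_nonneg <| Multiset.forall_mem_map_iff.mpr fun w hw =>
        coeff_inv_one_sub_X_pow_nonneg (hpos p w hw).ne'
    · exact constantCoeff_multiset_prod_eq_one <| Multiset.forall_mem_map_iff.mpr fun w hw =>
        constantCoeff_inv_one_sub_X_pow (hpos p w hw).ne'
  exact ⟨hcoeff, by rintro rfl; simp at hcoeff⟩

/-- Let `I` be finite and nonempty, `ε : I → {1, -1}`, and `W p` a multiset of positive integers
of fixed size `n` for each `p`.  If `q` minimizes the weight-sum strictly among points of the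
opposite sign, then the coefficient of `t^{(W q).sum}` in
`F = ∑_p ε p · t^{(W p).sum} · ∏_{w ∈ W p} (1 - t^w)⁻¹` has the same sign as `ε q`
(in particular it is nonzero), and hence `F ≠ 0`. -/
theorem fixed_point_series_coeff_sign (I : Type*) [Fintype I] [Nonempty I] (n : ℕ)
    (ε : I → ℤ) (hε : ∀ p, ε p = 1 ∨ ε p = -1)
    (W : I → Multiset ℕ) (hcard : ∀ p, Multiset.card (W p) = n)
    (hpos : ∀ p, ∀ w ∈ W p, 0 < w)
    (q : I) (hq : ∀ p, ε p ≠ ε q → (W q).sum < (W p).sum)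
    (F : PowerSeries ℚ)
    (hF : F = ∑ p : I, (ε p : PowerSeries ℚ) * (PowerSeries.X : PowerSeries ℚ) ^ (W p).sum *
        ((W p).map (fun w => (1 - (PowerSeries.X : PowerSeries ℚ) ^ w)⁻¹)).prod) :
    0 < (ε q : ℚ) * PowerSeries.coeff ((W q).sum) F ∧ F ≠ 0 :=
  fixed_point_series_coeff_sign_general I ε hε W hpos q hq F hF
end

section
/- Let m be a positive integer and let d = m(m+1). The formal power series ∑_{i=0}^{2m} (-1)^i · t^{S(i)} · ∏_{j=0, j≠i}^{2m} (1 - t^{|j-i|})^{-1}, where S(i) = ∑_{j≠i} |j-i|, is nonzero; in fact the coefficient of t^d equals (-1)^m times a positive integer. -/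
/-!
Writing `i = m + k`, the exponent is `S i = m(m+1) + k²`, so `t^{m(m+1)}` divides every summand,
and strictly divides all of them except the one for `i = m`. Every product
`∏ (1 - t^{|j-i|})⁻¹` has constant term `1`, so the coefficient of `t^{m(m+1)}` is exactly `(-1)^m`.
-/

open PowerSeries Finset

theorem two_mul_sum_range_abs_sub (a b : ℕ) :
    2 * ∑ j ∈ range (a + b + 1), |(j : ℤ) - a| = a * (a + 1) + b * (b + 1) := by
  induction a with
  | zero =>
    have gauss := congrArg (Nat.cast : ℕ → ℤ) (sum_range_id_mul_two (b + 1))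
    push_cast at gauss
    simp only [zero_add, Nat.cast_zero, sub_zero, Nat.abs_cast]
    linarith
  | succ a ih =>
    rw [show a + 1 + b + 1 = a + b + 1 + 1 by ring, sum_range_succ']
    simp only [Nat.cast_add, Nat.cast_one, add_sub_add_right_eq_sub, Nat.cast_zero, zero_sub,
      abs_neg] at ih ⊢
    rw [abs_of_nonneg (by positivity)]
    linear_combination ih

theorem sum_erase_range_natAbs_sub_eq (m i : ℕ) (hi : i ≤ 2 * m) :
    ((∑ j ∈ (range (2 * m + 1)).erase i, ((j : ℤ) - i).natAbs : ℕ) : ℤ) =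
      m * (m + 1) + ((i : ℤ) - m) ^ 2 := by
  obtain ⟨b, hb⟩ := Nat.exists_eq_add_of_le hi
  have hsum := two_mul_sum_range_abs_sub i b
  rw [← sum_erase (f := fun j : ℕ => |(j : ℤ) - i|) (a := i) _ (by simp)] at hsum
  have hb' : (b : ℤ) = 2 * m - i := by omega
  rw [hb'] at hsum
  rw [hb]
  push_cast
  linarith

theorem PowerSeries.coeff_sum_smul_X_pow_mul_of_lt {ι R : Type*} [CommSemiring R]
    {s : Finset ι} (c : ι → R) (e : ι → ℕ) (G : ι → R⟦X⟧) {i₀ : ι} (hi₀ : i₀ ∈ s)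
    (hlt : ∀ i ∈ s, i ≠ i₀ → e i₀ < e i) :
    coeff (e i₀) (∑ i ∈ s, c i • (X ^ e i * G i)) = c i₀ * constantCoeff (G i₀) := by
  rw [map_sum, sum_eq_single_of_mem i₀ hi₀]
  · rw [map_smul, coeff_X_pow_mul', if_pos le_rfl, Nat.sub_self, coeff_zero_eq_constantCoeff,
      smul_eq_mul]
  · intro i hi hne
    rw [map_smul, coeff_X_pow_mul', if_neg (not_le.mpr (hlt i hi hne)), smul_zero]

theorem PowerSeries.constantCoeff_prod_inv_one_sub_X_pow {ι k : Type*} [Field k]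
    (s : Finset ι) (e : ι → ℕ) (he : ∀ i ∈ s, e i ≠ 0) :
    constantCoeff (∏ i ∈ s, (1 - X ^ e i : k⟦X⟧)⁻¹) = 1 := by
  rw [map_prod]
  refine prod_eq_one fun i hi => ?_
  simp [constantCoeff_inv, zero_pow (he i hi)]

theorem cp_even_A_hat_series_ne_zero_general (m : ℕ)
    (S : ℕ → ℕ)
    (hS : ∀ i, S i = ∑ j ∈ (Finset.range (2 * m + 1)).erase i, ((j : ℤ) - (i : ℤ)).natAbs)
    (F : PowerSeries ℚ)
    (hF : F = ∑ i ∈ Finset.range (2 * m + 1),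
      ((-1 : ℚ) ^ i : ℚ) • ((PowerSeries.X : PowerSeries ℚ) ^ (S i) *
        ∏ j ∈ (Finset.range (2 * m + 1)).erase i,
          (1 - (PowerSeries.X : PowerSeries ℚ) ^ (((j : ℤ) - (i : ℤ)).natAbs))⁻¹)) :
    F ≠ 0 ∧ ∃ c : ℤ, 0 < c ∧ PowerSeries.coeff (R := ℚ) (m * (m + 1)) F = (-1) ^ m * (c : ℚ) := by
  have hS_eq (i : ℕ) (hi : i ∈ range (2 * m + 1)) : (S i : ℤ) = m * (m + 1) + ((i : ℤ) - m) ^ 2 :=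
    hS i ▸ sum_erase_range_natAbs_sub_eq m i (Nat.le_of_lt_succ (mem_range.1 hi))
  have hm_mem : m ∈ range (2 * m + 1) := mem_range.2 (by omega)
  have hSm : S m = m * (m + 1) := by zify; simpa using hS_eq m hm_mem
  have hcoeff : coeff (m * (m + 1)) F = (-1) ^ m := by
    rw [hF, ← hSm, coeff_sum_smul_X_pow_mul_of_lt (fun i => (-1 : ℚ) ^ i) S
      (fun i => ∏ j ∈ (range (2 * m + 1)).erase i, (1 - X ^ ((j : ℤ) - i).natAbs)⁻¹) hm_mem,
      constantCoeff_prod_inv_one_sub_X_pow, mul_one]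
    · intro j hj
      simpa [sub_eq_zero] using ne_of_mem_erase hj
    · intro i hi hne
      have : (0 : ℤ) < ((i : ℤ) - m) ^ 2 := by
        have : (i : ℤ) - m ≠ 0 := sub_ne_zero.2 (by exact_mod_cast hne)
        positivity
      zify
      linarith [hS_eq i hi, hS_eq m hm_mem]
  refine ⟨fun hF0 => ?_, 1, one_pos, by rw [hcoeff]; norm_num⟩
  rw [hF0, map_zero] at hcoeff
  exact pow_ne_zero m (by norm_num) hcoeff.symm

/-- For `m ≥ 1`, the Atiyah–Hirzebruch equivariant `Â`-genus expression for the standard circle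
action on `CP^{2m}`,
`∑_{i=0}^{2m} (-1)^i · t^{S i} · ∏_{j ≠ i} (1 - t^{|j-i|})⁻¹` with
`S i = ∑_{j ≠ i} |j - i|`, is a nonzero formal power series; in fact its coefficient of
`t^{m(m+1)}` equals `(-1)^m` times a positive integer. -/
theorem cp_even_A_hat_series_ne_zero (m : ℕ) (hm : 1 ≤ m)
    (S : ℕ → ℕ)
    (hS : ∀ i, S i = ∑ j ∈ (Finset.range (2 * m + 1)).erase i, ((j : ℤ) - (i : ℤ)).natAbs)
    (F : PowerSeries ℚ)
    (hF : F = ∑ i ∈ Finset.range (2 * m + 1),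
      ((-1 : ℚ) ^ i : ℚ) • ((PowerSeries.X : PowerSeries ℚ) ^ (S i) *
        ∏ j ∈ (Finset.range (2 * m + 1)).erase i,
          (1 - (PowerSeries.X : PowerSeries ℚ) ^ (((j : ℤ) - (i : ℤ)).natAbs))⁻¹)) :
    F ≠ 0 ∧ ∃ c : ℤ, 0 < c ∧ PowerSeries.coeff (R := ℚ) (m * (m + 1)) F = (-1) ^ m * (c : ℚ) :=
  cp_even_A_hat_series_ne_zero_general m S hS F hF
end
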